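/- arXiv:2605.12390 — 4 statements merged into one kernel-verified Lean document; each statement's English description precedes it below -/
import Mathlib

section
/- There is no integer x with gcd(x, 48) = 1 such that the reflexive modular reduction of x·{1, 2, 23} modulo 48 equals {2, 11, 13}. -/
/-!
Up to sign, the reduction of `r` modulo `n` is congruent to `r`, so the reduction of `k * r`
depends only on the reduction of `r`. The reduction of `x = x * 1` must be `2`, `11` or `13`;
then the reduction of `2 * x` is `4` or `22`, which is not in `{2, 11, 13}`.
-/

/-- Reflexive modular reduction of `r` modulo `n`: `min (r mod n, n - r mod n)`. -/
def reflRed (n : ℕ) (r : ℤ) : ℤ := min (r % (n : ℤ)) ((n : ℤ) - r % (n : ℤ))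

/-- Reflexive reduction of the set `x • R` modulo `n`. -/
def reflRedSet (n : ℕ) (x : ℤ) (R : Finset ℤ) : Finset ℤ :=
  R.image (fun r => reflRed n (x * r))

/-- The circulant graph `C_n(S)` on `ZMod n`. -/
def circulant (n : ℕ) (S : Finset ℤ) : SimpleGraph (ZMod n) where
  Adj a b := a ≠ b ∧ ∃ s ∈ S, a - b = (s : ZMod n) ∨ a - b = -(s : ZMod n)
  symm := by
    constructor
    rintro a b ⟨hab, s, hs, h⟩
    refine ⟨hab.symm, s, hs, ?_⟩
    have hba : b - a = -(a - b) := (neg_sub a b).symm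
    rcases h with h | h
    · right; rw [hba, h]
    · left; rw [hba, h, neg_neg]
  loopless := by constructor; rintro a ⟨h, -⟩; exact h rfl

theorem reflRed_congr {n : ℕ} {a b : ℤ} (h : a ≡ b [ZMOD n]) : reflRed n a = reflRed n b := by
  rw [reflRed, reflRed, h.eq]

theorem reflRed_neg (n : ℕ) (r : ℤ) : reflRed n (-r) = reflRed n r := by
  rw [reflRed, reflRed, Int.neg_emod, Int.natAbs_natCast]
  split_ifs with h
  · simp [Int.emod_eq_zero_of_dvd h]
  · rw [sub_sub_cancel, min_comm]

theorem reflRed_modEq_or_modEq_neg (n : ℕ) (r : ℤ) :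
    reflRed n r ≡ r [ZMOD n] ∨ reflRed n r ≡ -r [ZMOD n] := by
  rcases min_choice (r % (n : ℤ)) ((n : ℤ) - r % (n : ℤ)) with h | h <;> rw [reflRed, h]
  · exact Or.inl (Int.mod_modEq r n)
  · right
    simpa using (Int.modEq_zero_iff_dvd.2 (dvd_refl (n : ℤ))).sub (Int.mod_modEq r n)

theorem reflRed_mul_reflRed (n : ℕ) (k r : ℤ) :
    reflRed n (k * reflRed n r) = reflRed n (k * r) := by
  rcases reflRed_modEq_or_modEq_neg n r with h | h
  · exact reflRed_congr (h.mul_left k)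
  · rw [reflRed_congr (h.mul_left k), mul_neg, reflRed_neg]

theorem stmt2 :
    ¬ ∃ x : ℤ, Int.gcd x 48 = 1 ∧ reflRedSet 48 x ({1, 2, 23} : Finset ℤ) = {2, 11, 13} := by
  rintro ⟨x, -, hx⟩
  have hred (r : ℤ) (hr : r ∈ ({1, 2, 23} : Finset ℤ)) :
      reflRed 48 (x * r) ∈ ({2, 11, 13} : Finset ℤ) :=
    hx ▸ Finset.mem_image_of_mem _ hr
  have hx1 : reflRed 48 x ∈ ({2, 11, 13} : Finset ℤ) := by simpa using hred 1 (by decide)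
  have hx2 : reflRed 48 (2 * reflRed 48 x) ∈ ({2, 11, 13} : Finset ℤ) := by
    rw [reflRed_mul_reflRed, mul_comm]
    exact hred 2 (by decide)
  simp only [Finset.mem_insert, Finset.mem_singleton] at hx1
  rcases hx1 with h | h | h <;> rw [h] at hx2 <;> revert hx2 <;> decide
end

section
/- Let n, k ≥ 1 and let R, S be finite sets of integers. If the circulant graphs C_n(R) and C_n(S) are isomorphic, then the circulant graphs C_{kn}(kR) and C_{kn}(kS) are isomorphic, where kR = {k·r : r ∈ R}. -/
/-!
Multiplication by `k` embeds `ZMod n` into `ZMod (k * n)` with image the subgroup `H = kℤ/knℤ`,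
and carries the jumps `T` onto the jumps `kT`. All edges of `C_{kn}(kT)` therefore stay inside
cosets of `H`, and choosing a representative of each coset identifies `C_{kn}(kT)` with
`⊥ □ C_n(T)` on `(ZMod (k * n) ⧸ H) × ZMod n`, i.e. with one copy of `C_n(T)` per coset. An
isomorphism `C_n(R) ≃g C_n(S)` is then applied copywise.
-/

namespace SimpleGraph.Iso

variable {α α' β β' : Type*} {G : SimpleGraph α} {G' : SimpleGraph α'} {H : SimpleGraph β}
  {H' : SimpleGraph β'}

def boxProd (f : G ≃g G') (g : H ≃g H') : G.boxProd H ≃g G'.boxProd H' where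
  toEquiv := f.toEquiv.prodCongr g.toEquiv
  map_rel_iff' := by
    rintro ⟨a₁, b₁⟩ ⟨a₂, b₂⟩
    simp [boxProd_adj, f.map_adj_iff, g.map_adj_iff]

end SimpleGraph.Iso

section CosetDecomposition

variable {A G : Type*} [AddGroup A] [AddCommGroup G] {φ : A →+ G}

namespace QuotientAddGroup

lemma out_add_sub_out_add_mem_image_iff (hφ : Function.Injective φ) {s : Set A}
    {c c' : G ⧸ φ.range} {a a' : A} :
    c.out + φ a - (c'.out + φ a') ∈ φ '' s ↔ c = c' ∧ a - a' ∈ s := by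
  constructor
  · rintro ⟨t, ht, heq⟩
    have hc : c = c' := by
      have hmk := congrArg (QuotientAddGroup.mk (s := φ.range)) heq
      have h0 : ((φ t : G) : G ⧸ φ.range) = 0 := (QuotientAddGroup.eq_zero_iff _).mpr ⟨t, rfl⟩
      simpa [h0, sub_eq_zero] using hmk.symm
    subst hc
    refine ⟨rfl, ?_⟩
    rw [add_sub_add_left_eq_sub, ← map_sub, hφ.eq_iff] at heq
    exact heq ▸ ht
  · rintro ⟨rfl, h⟩
    exact ⟨a - a', h, by rw [add_sub_add_left_eq_sub, map_sub]⟩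

variable (φ) in
noncomputable def cosetDecomposition (hφ : Function.Injective φ) : (G ⧸ φ.range) × A ≃ G :=
  Equiv.ofBijective (fun p => p.1.out + φ p.2) <| by
    refine ⟨fun ⟨c, a⟩ ⟨c', a'⟩ h => ?_, fun g => ?_⟩
    · obtain ⟨rfl, ha⟩ := (out_add_sub_out_add_mem_image_iff hφ (s := {0})).mp
        ⟨0, rfl, (map_zero φ).trans (sub_eq_zero.mpr h).symm⟩
      exact Prod.ext rfl (sub_eq_zero.mp ha)
    · obtain ⟨a, ha⟩ :=
        (QuotientAddGroup.eq (s := φ.range)).mp (QuotientAddGroup.out_eq' (g : G ⧸ φ.range))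
      exact ⟨(g, a), by simp [ha]⟩

lemma cosetDecomposition_apply (hφ : Function.Injective φ) (p : (G ⧸ φ.range) × A) :
    cosetDecomposition φ hφ p = p.1.out + φ p.2 := rfl

end QuotientAddGroup

open QuotientAddGroup in
noncomputable def SimpleGraph.botBoxProdCirculantGraphIso (hφ : Function.Injective φ)
    (s : Set A) :
    (⊥ : SimpleGraph (G ⧸ φ.range)).boxProd (circulantGraph s) ≃g circulantGraph (φ '' s) where
  toEquiv := cosetDecomposition φ hφ
  map_rel_iff' := by
    rintro ⟨c, a⟩ ⟨c', a'⟩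
    rw [circulantGraph_adj, (cosetDecomposition φ hφ).injective.eq_iff]
    simp only [boxProd_adj, bot_adj, false_and, false_or, cosetDecomposition_apply,
      out_add_sub_out_add_mem_image_iff hφ, circulantGraph_adj]
    by_cases hc : c = c'
    · subst hc; simp
    · simp [hc, Ne.symm hc]

end CosetDecomposition

namespace ZMod

def mulLeftHom (k n : ℕ) : ZMod n →+ ZMod (k * n) :=
  ZMod.lift n ⟨(Int.castAddHom _).comp (AddMonoidHom.mulLeft (k : ℤ)), by
    show ((k * n : ℤ) : ZMod (k * n)) = 0
    exact_mod_cast ZMod.natCast_self (k * n)⟩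

lemma mulLeftHom_intCast (k n : ℕ) (t : ℤ) : mulLeftHom k n t = ((k * t : ℤ) : ZMod (k * n)) :=
  ZMod.lift_coe _ _ _

lemma mulLeftHom_injective {k n : ℕ} (hk : k ≠ 0) : Function.Injective (mulLeftHom k n) :=
  (ZMod.lift_injective _).mpr fun t ht => by
    have hdvd : ((k * n : ℕ) : ℤ) ∣ k * t := (ZMod.intCast_zmod_eq_zero_iff_dvd _ _).mp ht
    push_cast at hdvd
    rw [ZMod.intCast_zmod_eq_zero_iff_dvd]
    exact (Int.mul_dvd_mul_iff_left (by exact_mod_cast hk)).mp hdvd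

end ZMod

open SimpleGraph

lemma circulant_eq_circulantGraph (m : ℕ) (T : Finset ℤ) :
    circulant m T = circulantGraph ((↑) '' (T : Set ℤ)) := by
  ext a b
  simp only [circulant, circulantGraph_adj, Set.mem_image, Finset.mem_coe, ← exists_or,
    ← and_or_left, ← neg_eq_iff_eq_neg, neg_sub, eq_comm (a := a - b), eq_comm (a := b - a)]

lemma circulant_image_mul (k n : ℕ) (T : Finset ℤ) :
    circulant (k * n) (T.image ((k : ℤ) * ·)) =
      circulantGraph (ZMod.mulLeftHom k n '' ((↑) '' (T : Set ℤ))) := by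
  rw [circulant_eq_circulantGraph, Finset.coe_image, Set.image_image, Set.image_image]
  simp [ZMod.mulLeftHom_intCast]

theorem stmt10_general (n k : ℕ) (hk : 1 ≤ k) (R S : Finset ℤ)
    (h : Nonempty (circulant n R ≃g circulant n S)) :
    Nonempty (circulant (k * n) (R.image (fun r => (k : ℤ) * r)) ≃g
      circulant (k * n) (S.image (fun r => (k : ℤ) * r))) := by
  obtain ⟨e⟩ := h
  rw [circulant_eq_circulantGraph, circulant_eq_circulantGraph] at e
  rw [circulant_image_mul, circulant_image_mul]
  have hφ := ZMod.mulLeftHom_injective (n := n) (Nat.one_le_iff_ne_zero.mp hk)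
  exact ⟨(botBoxProdCirculantGraphIso hφ _).symm.trans
    ((Iso.refl.boxProd e).trans (botBoxProdCirculantGraphIso hφ _))⟩

theorem stmt10 (n k : ℕ) (hn : 1 ≤ n) (hk : 1 ≤ k) (R S : Finset ℤ)
    (h : Nonempty (circulant n R ≃g circulant n S)) :
    Nonempty (circulant (k * n) (R.image (fun r => (k : ℤ) * r)) ≃g
      circulant (k * n) (S.image (fun r => (k : ℤ) * r))) :=
  stmt10_general n k hk R S h
end

section
/- The orbit of the set {1, 3, 26, 28} under S ↦ reflexive reduction of x·S modulo 81, as x ranges over integers coprime to 81, consists of exactly the nine sets {1,3,26,28}, {2,6,25,29}, {4,12,23,31}, {5,15,22,32}, {7,20,21,34}, {8,19,24,35}, {10,17,30,37}, {11,16,33,38}, {13,14,39,40}. -/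
/-! The reduction of `x • S` depends on the multiplier `x` only through its residue modulo 81, so
the orbit is the image of the 54 units in `[0, 81)`, which is a finite computation. -/

lemma reflRed_mul_emod_left (n : ℕ) (x r : ℤ) :
    reflRed n (x % n * r) = reflRed n (x * r) := by
  simp only [reflRed, Int.mul_emod, Int.emod_emod]

lemma reflRedSet_emod_left (n : ℕ) (x : ℤ) (R : Finset ℤ) :
    reflRedSet n (x % n) R = reflRedSet n x R :=
  Finset.image_congr fun r _ => reflRed_mul_emod_left n x r

lemma setOf_reflRedSet_eq_coe_image (n : ℕ) [NeZero n] (R : Finset ℤ) :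
    {S | ∃ x : ℤ, Int.gcd x n = 1 ∧ S = reflRedSet n x R} =
      ↑(((Finset.Ico 0 (n : ℤ)).filter fun x => Int.gcd x n = 1).image
        fun x => reflRedSet n x R) := by
  have hn : (0 : ℤ) < n := by exact_mod_cast Nat.pos_of_neZero n
  ext S
  simp only [Set.mem_ofPred_eq, Finset.coe_image, Finset.coe_filter, Set.mem_image,
    Finset.mem_Ico]
  constructor
  · rintro ⟨x, hx, rfl⟩
    exact ⟨x % n, ⟨⟨Int.emod_nonneg x hn.ne', Int.emod_lt_of_pos x hn⟩,
      by rwa [Int.gcd_emod]⟩, reflRedSet_emod_left n x R⟩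
  · rintro ⟨x, ⟨-, hx⟩, rfl⟩
    exact ⟨x, hx, rfl⟩

lemma image_reflRedSet_units_81 :
    ((Finset.Ico (0 : ℤ) 81).filter fun x => Int.gcd x 81 = 1).image
        (fun x => reflRedSet 81 x ({1, 3, 26, 28} : Finset ℤ)) =
      {({1, 3, 26, 28} : Finset ℤ), {2, 6, 25, 29}, {4, 12, 23, 31}, {5, 15, 22, 32},
        {7, 20, 21, 34}, {8, 19, 24, 35}, {10, 17, 30, 37}, {11, 16, 33, 38},
        {13, 14, 39, 40}} := by
  decide

theorem stmt14 :
    {S : Finset ℤ | ∃ x : ℤ, Int.gcd x 81 = 1 ∧ S = reflRedSet 81 x ({1, 3, 26, 28} : Finset ℤ)} =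
      {({1, 3, 26, 28} : Finset ℤ), {2, 6, 25, 29}, {4, 12, 23, 31}, {5, 15, 22, 32},
        {7, 20, 21, 34}, {8, 19, 24, 35}, {10, 17, 30, 37}, {11, 16, 33, 38},
        {13, 14, 39, 40}} := by
  have h := setOf_reflRedSet_eq_coe_image 81 {1, 3, 26, 28}
  rw [Nat.cast_ofNat, image_reflRedSet_units_81] at h
  simpa only [Finset.coe_insert, Finset.coe_singleton] using h
end

section
/- The map φ : ZMod 32 → ZMod 32 defined by φ(v) = v + 8·(v mod 2) (where v mod 2 ∈ {0,1} is the parity of the canonical representative) is a graph isomorphism from C_32(1, 2, 15) to C_32(2, 7, 9), and there is no integer x coprime to 32 whose reflexive modular reduction of x·{1,2,15} modulo 32 equals {2,7,9}. -/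
instance circulant.instDecidableRelAdj (n : ℕ) (S : Finset ℤ) :
    DecidableRel (circulant n S).Adj := fun a b =>
  decidable_of_iff (a ≠ b ∧ ∃ s ∈ S, a - b = (s : ZMod n) ∨ a - b = -(s : ZMod n)) Iff.rfl

def parityShift (v : ZMod 32) : ZMod 32 := v + ((8 * (v.val % 2) : ℕ) : ZMod 32)

theorem parityShift_bijective : Function.Bijective parityShift := by
  decide

theorem circulant_adj_iff_adj_parityShift (a b : ZMod 32) :
    (circulant 32 {1, 2, 15}).Adj a b ↔
      (circulant 32 {2, 7, 9}).Adj (parityShift a) (parityShift b) := by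
  revert a b
  decide

theorem reflRed_mem_reflRedSet {n : ℕ} {x r : ℤ} {R : Finset ℤ} (hr : r ∈ R) :
    reflRed n (x * r) ∈ reflRedSet n x R :=
  Finset.mem_image_of_mem _ hr

theorem not_reflRed_mem_and_reflRed_two_mul_mem (x : ℤ) :
    ¬ (reflRed 32 x ∈ ({2, 7, 9} : Finset ℤ) ∧ reflRed 32 (2 * x) ∈ ({2, 7, 9} : Finset ℤ)) := by
  -- `x ≡ ±2, ±7, ±9` gives `2x ≡ ±4, ±14, ±14`.
  simp only [reflRed, Finset.mem_insert, Finset.mem_singleton]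
  omega

theorem reflRedSet_ne (x : ℤ) : reflRedSet 32 x {1, 2, 15} ≠ {2, 7, 9} := by
  intro h
  have h₁ : reflRed 32 (x * 1) ∈ reflRedSet 32 x {1, 2, 15} := reflRed_mem_reflRedSet (by simp)
  have h₂ : reflRed 32 (x * 2) ∈ reflRedSet 32 x {1, 2, 15} := reflRed_mem_reflRedSet (by simp)
  rw [h, mul_one] at h₁
  rw [h, mul_comm] at h₂
  exact not_reflRed_mem_and_reflRed_two_mul_mem x ⟨h₁, h₂⟩

theorem stmt18 :
    (Function.Bijective (fun v : ZMod 32 => v + ((8 * (v.val % 2) : ℕ) : ZMod 32)) ∧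
      ∀ a b : ZMod 32, (circulant 32 ({1, 2, 15} : Finset ℤ)).Adj a b ↔
        (circulant 32 ({2, 7, 9} : Finset ℤ)).Adj
          (a + ((8 * (a.val % 2) : ℕ) : ZMod 32)) (b + ((8 * (b.val % 2) : ℕ) : ZMod 32))) ∧
    ¬ ∃ x : ℤ, Int.gcd x 32 = 1 ∧
      reflRedSet 32 x ({1, 2, 15} : Finset ℤ) = {2, 7, 9} := by
  refine ⟨⟨parityShift_bijective, circulant_adj_iff_adj_parityShift⟩, ?_⟩
  rintro ⟨x, -, hx⟩
  exact reflRedSet_ne x hx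
end
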